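/- Let (A₂,∘) be a finite-dimensional Novikov algebra with a symmetric bilinear form τ, and γ: A₂ × A₂ → A₂* a bilinear map. Define on A₂ ⊕ A₂* the product (x+f)⋄(y+g) = x∘y + γ(x,y) + L*_⋆(x)g - R*_∘(y)f and the bilinear form B̃(x+f, y+g) = τ(x,y) + f(y) + g(x), where ⟨L*_⋆(x)g, z⟩ = -g(x⋆z) and ⟨R*_∘(y)f, z⟩ = -f(z∘y). Then (A₂⊕A₂*, ⋄, B̃) is a quadratic Novikov algebra if and only if for all x,y,z ∈ A₂: (i) γ(x∘y,z) - R*_∘(z)γ(x,y) = γ(x∘z,y) - R*_∘(y)γ(x,z); (ii) γ(x∘y,z) - γ(x,y∘z) - γ(y∘x,z) + γ(y,x∘z) = R*_∘(z)(γ(x,y)-γ(y,x)) + L*_⋆(x)γ(y,z) - L*_⋆(y)γ(x,z); (iii) τ(x∘y,z) + γ(x,y)(z) = -τ(y, x⋆z) - γ(x,z)(y) - γ(z,x)(y). -/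
import Mathlib


/-- L*_⋆(x)g, defined by ⟨L*_⋆(x)g, z⟩ = -g(x⋆z) where x⋆z = x∘z + z∘x. -/
def LstarDual {k A₂ : Type*} [Field k] [AddCommGroup A₂] [Module k A₂]
    (mul : A₂ →ₗ[k] A₂ →ₗ[k] A₂) (x : A₂) (g : Module.Dual k A₂) : Module.Dual k A₂ :=
  -(g ∘ₗ (mul x + mul.flip x))

/-- -R*_∘'s building block: ⟨R*_∘(y)f, z⟩ = -f(z∘y). -/
def RstarDual {k A₂ : Type*} [Field k] [AddCommGroup A₂] [Module k A₂]
    (mul : A₂ →ₗ[k] A₂ →ₗ[k] A₂) (y : A₂) (f : Module.Dual k A₂) : Module.Dual k A₂ :=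
  -(f ∘ₗ (mul.flip y))

/-- The product (x+f)⋄(y+g) = x∘y + γ(x,y) + L*_⋆(x)g - R*_∘(y)f on A₂ ⊕ A₂*. -/
def TstarExtMul {k A₂ : Type*} [Field k] [AddCommGroup A₂] [Module k A₂]
    (mul : A₂ →ₗ[k] A₂ →ₗ[k] A₂) (γ : A₂ →ₗ[k] A₂ →ₗ[k] Module.Dual k A₂) :
    (A₂ × Module.Dual k A₂) → (A₂ × Module.Dual k A₂) → (A₂ × Module.Dual k A₂) :=
  fun p q => (mul p.1 q.1, γ p.1 q.1 + LstarDual mul p.1 q.2 - RstarDual mul q.1 p.2)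

/-- The bilinear form B̃(x+f, y+g) = τ(x,y) + f(y) + g(x) on A₂ ⊕ A₂*. -/
def TstarExtForm {k A₂ : Type*} [Field k] [AddCommGroup A₂] [Module k A₂]
    (τ : LinearMap.BilinForm k A₂) :
    (A₂ × Module.Dual k A₂) → (A₂ × Module.Dual k A₂) → k :=
  fun p q => τ p.1 q.1 + p.2 q.1 + q.2 p.1

/-- (A₂ ⊕ A₂*, ⋄, B̃) is a quadratic Novikov algebra iff γ satisfies
conditions (i), (ii) and (iii). -/
theorem Tstar_extension_quadratic_novikov_iff
    {k A₂ : Type*} [Field k] [CharZero k] [AddCommGroup A₂] [Module k A₂]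
    [FiniteDimensional k A₂]
    (mul : A₂ →ₗ[k] A₂ →ₗ[k] A₂)
    (hnov1 : ∀ a b c, mul (mul a b) c - mul a (mul b c) = mul (mul b a) c - mul b (mul a c))
    (hnov2 : ∀ a b c, mul (mul a b) c = mul (mul a c) b)
    (τ : LinearMap.BilinForm k A₂) (hτ : ∀ x y, τ x y = τ y x)
    (γ : A₂ →ₗ[k] A₂ →ₗ[k] Module.Dual k A₂) :
    ((∀ p q r, TstarExtMul mul γ (TstarExtMul mul γ p q) r
          - TstarExtMul mul γ p (TstarExtMul mul γ q r)
        = TstarExtMul mul γ (TstarExtMul mul γ q p) r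
          - TstarExtMul mul γ q (TstarExtMul mul γ p r)) ∧
     (∀ p q r, TstarExtMul mul γ (TstarExtMul mul γ p q) r
        = TstarExtMul mul γ (TstarExtMul mul γ p r) q) ∧
     (∀ p q, TstarExtForm τ p q = TstarExtForm τ q p) ∧
     (∀ p, (∀ q, TstarExtForm τ p q = 0) → p = 0) ∧
     (∀ p q r, TstarExtForm τ (TstarExtMul mul γ p q) r
        = -(TstarExtForm τ q (TstarExtMul mul γ p r + TstarExtMul mul γ r p))))
    ↔
    ((∀ x y z, γ (mul x y) z - RstarDual mul z (γ x y)
        = γ (mul x z) y - RstarDual mul y (γ x z)) ∧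
     (∀ x y z, γ (mul x y) z - γ x (mul y z) - γ (mul y x) z + γ y (mul x z)
        = RstarDual mul z (γ x y - γ y x) + LstarDual mul x (γ y z)
          - LstarDual mul y (γ x z)) ∧
     (∀ x y z, τ (mul x y) z + γ x y z
        = -(τ y (mul x z + mul z x)) - γ x z y - γ z x y)) := by
  constructor
  · rintro ⟨h1, h2, -, -, h5⟩
    refine ⟨?_, ?_, ?_⟩
    · intro x y z
      ext w
      have H := congrArg (fun t : A₂ × Module.Dual k A₂ => t.2 w) (h2 (x, 0) (y, 0) (z, 0))
      simp only [TstarExtMul, RstarDual, LstarDual, LinearMap.sub_apply, LinearMap.add_apply,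
        LinearMap.neg_apply, LinearMap.comp_apply, LinearMap.flip_apply, map_add, map_sub,
        map_neg, map_zero, neg_neg, LinearMap.zero_apply, neg_zero, add_zero, zero_add, sub_zero,
        LinearMap.zero_comp, LinearMap.comp_zero] at *
      linear_combination H
    · intro x y z
      ext w
      have H := congrArg (fun t : A₂ × Module.Dual k A₂ => t.2 w) (h1 (x, 0) (y, 0) (z, 0))
      simp only [TstarExtMul, RstarDual, LstarDual, LinearMap.sub_apply, LinearMap.add_apply,
        LinearMap.neg_apply, LinearMap.comp_apply, LinearMap.flip_apply, map_add, map_sub,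
        map_neg, map_zero, neg_neg, LinearMap.zero_apply, neg_zero, add_zero, zero_add, sub_zero,
        LinearMap.zero_comp, LinearMap.comp_zero, Prod.snd_sub] at *
      linear_combination H
    · intro x y z
      have H := h5 (x, 0) (y, 0) (z, 0)
      simp only [TstarExtMul, TstarExtForm, RstarDual, LstarDual, LinearMap.sub_apply,
        LinearMap.add_apply, LinearMap.neg_apply, LinearMap.comp_apply, LinearMap.flip_apply,
        map_add, map_sub, map_neg, map_zero, neg_neg, LinearMap.zero_apply, neg_zero, add_zero,
        zero_add, sub_zero, LinearMap.zero_comp, Prod.fst_add, Prod.snd_add] at *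
      linear_combination H
  · rintro ⟨hi, hii, hiii⟩
    refine ⟨?_, ?_, ?_, ?_, ?_⟩
    · rintro ⟨x, f⟩ ⟨y, g⟩ ⟨z, h⟩
      refine Prod.ext ?_ ?_
      · simpa [TstarExtMul] using hnov1 x y z
      ext w
      have H1 := LinearMap.congr_fun (hii x y z) w
      have N1 := congrArg h (hnov1 x y w)
      have N2 := congrArg h (hnov1 x w y)
      have N3 := congrArg h (hnov1 y w x)
      have N4 := congrArg h (hnov2 w x y)
      have N5 := congrArg g (hnov1 w x z)
      have N6 := congrArg g (hnov2 w x z)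
      have N7 := congrArg f (hnov1 w y z)
      have N8 := congrArg f (hnov2 w y z)
      simp only [TstarExtMul, LstarDual, RstarDual, LinearMap.sub_apply, LinearMap.add_apply,
        LinearMap.neg_apply, LinearMap.comp_apply, LinearMap.flip_apply, map_add, map_sub,
        map_neg, map_zero, neg_neg, Prod.fst_sub, Prod.snd_sub] at *
      linear_combination H1 - N1 - N2 + N3 - 2*N4 - N5 + 2*N6 + N7 - 2*N8
    · rintro ⟨x, f⟩ ⟨y, g⟩ ⟨z, h⟩
      refine Prod.ext (hnov2 x y z) ?_
      ext w
      have H1 := LinearMap.congr_fun (hi x y z) w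
      have N1 := congrArg f (hnov2 w y z)
      have N2 := congrArg h (hnov2 x y w)
      have N3 := congrArg h (hnov2 w x y)
      have N4 := congrArg h (hnov1 x w y)
      have N5 := congrArg g (hnov2 x z w)
      have N6 := congrArg g (hnov2 w x z)
      have N7 := congrArg g (hnov1 x w z)
      simp only [TstarExtMul, LstarDual, RstarDual, LinearMap.sub_apply, LinearMap.add_apply,
        LinearMap.neg_apply, LinearMap.comp_apply, LinearMap.flip_apply, map_add, map_sub,
        map_neg, map_zero, neg_neg] at *
      linear_combination H1 - N2 - N3 - N4 + N5 + N6 + N7 - N1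
    · intro p q
      simp only [TstarExtForm]
      linear_combination hτ p.1 q.1
    · rintro ⟨x, f⟩ h
      have hx : x = 0 := by
        rw [← Module.forall_dual_apply_eq_zero_iff k]
        intro g
        simpa [TstarExtForm] using h (0, g)
      have hf : f = 0 := by
        ext y
        simpa [TstarExtForm, hx] using h (y, 0)
      simp [hx, hf]
    · rintro ⟨x, f⟩ ⟨y, g⟩ ⟨z, h⟩
      have H := hiii x y z
      simp only [TstarExtMul, TstarExtForm, LstarDual, RstarDual, LinearMap.sub_apply,
        LinearMap.add_apply, LinearMap.neg_apply, LinearMap.comp_apply, LinearMap.flip_apply,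
        map_add, map_sub, map_neg, neg_neg, Prod.fst_add, Prod.snd_add] at *
      linear_combination H
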